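/- arXiv:2408.15688 — 2 statements merged into one kernel-verified Lean document; each statement's English description precedes it below -/
import Mathlib

section
/- The Jaccard dissimilarity between two finite sets A and B (within a universe U), defined as J(A,B) = 1 − |A ∩ B| / |A ∪ B| when A ∪ B ≠ ∅ and 0 otherwise, satisfies the triangle inequality J(A,C) ≤ J(A,B) + J(B,C). -/
open scoped symmDiff


/-- Jaccard dissimilarity between two finite sets. -/
noncomputable def jaccard {α : Type*} [DecidableEq α] (A B : Finset α) : ℝ :=
  if A ∪ B = ∅ then 0
  else 1 - ((A ∩ B).card : ℝ) / ((A ∪ B).card : ℝ)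

lemma card_union_eq_card_inter_add {α : Type*} [DecidableEq α] (A B : Finset α) :
    (A ∪ B).card = (A ∩ B).card + (A ∆ B).card := by
  have h : A ∪ B = (A ∩ B) ∪ (A ∆ B) := by
    have := inf_sup_symmDiff A B
    simpa [Finset.sup_eq_union, Finset.inf_eq_inter] using this.symm
  rw [h, Finset.card_union_of_disjoint]
  simpa [Finset.inf_eq_inter] using (disjoint_symmDiff_inf A B).symm

lemma jaccard_nonneg {α : Type*} [DecidableEq α] (A B : Finset α) : 0 ≤ jaccard A B := by
  unfold jaccard
  split
  · exact le_refl 0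
  · have h : ((A ∩ B).card : ℝ) / ((A ∪ B).card : ℝ) ≤ 1 := by
      apply div_le_one_of_le₀
      · exact_mod_cast Finset.card_le_card (Finset.inter_subset_union)
      · positivity
    linarith

lemma jaccard_eq {α : Type*} [DecidableEq α] (A B : Finset α) (h : A ∪ B ≠ ∅) :
    jaccard A B = ((A ∆ B).card : ℝ) / ((A ∪ B).card : ℝ) := by
  have hpos : (0:ℝ) < ((A ∪ B).card : ℝ) := by
    have := Finset.card_pos.mpr (Finset.nonempty_of_ne_empty h)
    exact_mod_cast this
  rw [jaccard, if_neg h]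
  have := card_union_eq_card_inter_add A B
  field_simp
  push_cast [this]
  ring

theorem stmt9 {α : Type*} [DecidableEq α] (A B C : Finset α) :
    jaccard A C ≤ jaccard A B + jaccard B C := by
  by_cases hAC : A ∪ C = ∅
  · rw [jaccard, if_pos hAC]
    have := jaccard_nonneg A B; have := jaccard_nonneg B C; linarith
  by_cases hAB : A ∪ B = ∅
  · have hA : A = ∅ := by simpa using (Finset.union_eq_empty.mp hAB).1
    have hB : B = ∅ := by simpa using (Finset.union_eq_empty.mp hAB).2
    subst hA; subst hB
    simp [jaccard]
  by_cases hBC : B ∪ C = ∅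
  · have hB : B = ∅ := by simpa using (Finset.union_eq_empty.mp hBC).1
    have hC : C = ∅ := by simpa using (Finset.union_eq_empty.mp hBC).2
    subst hB; subst hC
    simp [jaccard]
  rw [jaccard_eq A C hAC, jaccard_eq A B hAB, jaccard_eq B C hBC]
  set m : ℝ := ((A ∆ B).card : ℝ) with hm
  set n : ℝ := ((B ∆ C).card : ℝ) with hn
  set p : ℝ := ((A ∆ C).card : ℝ) with hp
  set k : ℝ := ((A ∩ C).card : ℝ) with hk
  have hm0 : 0 ≤ m := by positivity
  have hn0 : 0 ≤ n := by positivity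
  have hp0 : 0 ≤ p := by positivity
  have hk0 : 0 ≤ k := by positivity
  have hpmn : p ≤ m + n := by
    rw [hp, hm, hn]
    have h1 : A ∆ C ⊆ (A ∆ B) ∪ (B ∆ C) := symmDiff_triangle A B C
    calc ((A ∆ C).card : ℝ) ≤ (((A ∆ B) ∪ (B ∆ C)).card : ℝ) := by
          exact_mod_cast Finset.card_le_card h1
      _ ≤ _ := by exact_mod_cast Finset.card_union_le _ _
  have hACcard : ((A ∪ C).card : ℝ) = p + k := by
    rw [hp, hk]; push_cast [card_union_eq_card_inter_add A C]; ring
  have hABpos : (0:ℝ) < ((A ∪ B).card : ℝ) := by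
    exact_mod_cast Finset.card_pos.mpr (Finset.nonempty_of_ne_empty hAB)
  have hBCpos : (0:ℝ) < ((B ∪ C).card : ℝ) := by
    exact_mod_cast Finset.card_pos.mpr (Finset.nonempty_of_ne_empty hBC)
  have hACpos : (0:ℝ) < p + k := by
    rw [← hACcard]
    exact_mod_cast Finset.card_pos.mpr (Finset.nonempty_of_ne_empty hAC)
  -- |A ∪ B| ≤ m + n + k
  have hsub1 : A ∩ B ⊆ (B ∆ C) ∪ (A ∩ C) := by
    intro x hx
    simp only [Finset.mem_inter] at hx
    by_cases hxC : x ∈ C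
    · exact Finset.mem_union_right _ (Finset.mem_inter.mpr ⟨hx.1, hxC⟩)
    · exact Finset.mem_union_left _ (Finset.mem_symmDiff.mpr (Or.inl ⟨hx.2, hxC⟩))
  have hsub2 : B ∩ C ⊆ (A ∆ B) ∪ (A ∩ C) := by
    intro x hx
    simp only [Finset.mem_inter] at hx
    by_cases hxA : x ∈ A
    · exact Finset.mem_union_right _ (Finset.mem_inter.mpr ⟨hxA, hx.2⟩)
    · exact Finset.mem_union_left _ (Finset.mem_symmDiff.mpr (Or.inr ⟨hx.1, hxA⟩))
  have hu1 : ((A ∪ B).card : ℝ) ≤ m + n + k := by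
    have h1 : ((A ∩ B).card : ℝ) ≤ n + k := by
      rw [hn, hk]
      calc ((A ∩ B).card : ℝ) ≤ (((B ∆ C) ∪ (A ∩ C)).card : ℝ) := by
            exact_mod_cast Finset.card_le_card hsub1
        _ ≤ _ := by exact_mod_cast Finset.card_union_le _ _
    have h2 : ((A ∪ B).card : ℝ) = ((A ∩ B).card : ℝ) + m := by
      rw [hm]; push_cast [card_union_eq_card_inter_add A B]; ring
    linarith
  have hu2 : ((B ∪ C).card : ℝ) ≤ m + n + k := by
    have h1 : ((B ∩ C).card : ℝ) ≤ m + k := by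
      rw [hm, hk]
      calc ((B ∩ C).card : ℝ) ≤ (((A ∆ B) ∪ (A ∩ C)).card : ℝ) := by
            exact_mod_cast Finset.card_le_card hsub2
        _ ≤ _ := by exact_mod_cast Finset.card_union_le _ _
    have h2 : ((B ∪ C).card : ℝ) = ((B ∩ C).card : ℝ) + n := by
      rw [hn]; push_cast [card_union_eq_card_inter_add B C]; ring
    linarith
  have hs : (0:ℝ) < m + n + k := by linarith
  rw [hACcard]
  have step1 : p / (p + k) ≤ (m + n) / (m + n + k) := by
    rw [div_le_div_iff₀ hACpos hs]; nlinarith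
  have step2 : m / (m + n + k) ≤ m / ((A ∪ B).card : ℝ) :=
    div_le_div_of_nonneg_left hm0 hABpos hu1 |>.trans_eq rfl
  have step3 : n / (m + n + k) ≤ n / ((B ∪ C).card : ℝ) :=
    div_le_div_of_nonneg_left hn0 hBCpos hu2
  have : (m + n) / (m + n + k) = m / (m + n + k) + n / (m + n + k) := by ring
  linarith [step1, step2, step3, this.le]
end

section
/- For two nonzero vectors u, v ∈ ℝ^N and a random hyperplane through the origin with normal vector w chosen so that the angle θ between u and v satisfies the standard uniform-direction property, the probability that u and v lie on the same side of the hyperplane (i.e., sign(⟨u,w⟩) = sign(⟨v,w⟩)) equals 1 − θ/π, where θ ∈ [0, π] is the angle between u and v. -/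
/-!
Isometry invariance makes every proper subspace null, so the hyperplanes `u^⊥` and `v^⊥` can be
ignored, and off them the complement of the event is the union of the two wedges
`{⟪u, w⟫ > 0 > ⟪v, w⟫}` and `{⟪v, w⟫ > 0 > ⟪u, w⟫}`. Two pairs of vectors with the same norms and
inner product are exchanged by an isometry (a product of two reflections), so the measure of a
wedge depends only on its angle. Cutting the wedge of angle `s + t` along the hyperplane orthogonal
to the intermediate direction shows that this measure is additive in the angle, hence linear; the
wedge of angle `π` is a half-space, of measure `1 / 2` by the symmetry `w ↦ -w`. So each wedge
has measure `θ / (2π)`.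
-/

open MeasureTheory RealInnerProductSpace
open Real InnerProductGeometry Set Submodule Module Function

section AdditiveOnInterval

variable {G : ℝ → ℝ} {L : ℝ}

theorem natCast_mul_apply_of_add_eq
    (hadd : ∀ x y, 0 ≤ x → 0 ≤ y → x + y ≤ L → G (x + y) = G x + G y) {x : ℝ} (hx : 0 ≤ x)
    (k : ℕ) (hk : k * x ≤ L) : G (k * x) = k * G x := by
  induction k with
  | zero => simpa using hadd 0 0 le_rfl le_rfl (by simpa using hk)
  | succ k ih =>
    have hkx : (k : ℝ) * x + x ≤ L := by push_cast at hk; linarith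
    push_cast
    rw [add_one_mul, hadd _ _ (by positivity) hx hkx, ih (by linarith), add_one_mul]

theorem sub_one_div_mul_le_of_add_eq (hL : 0 < L) (hG : ∀ x ∈ Icc 0 L, 0 ≤ G x)
    (hadd : ∀ x y, 0 ≤ x → 0 ≤ y → x + y ≤ L → G (x + y) = G x + G y) {y : ℝ}
    (hy : y ∈ Icc 0 L) {n : ℕ} (hn : 0 < n) : (y / L - 1 / n) * G L ≤ G y := by
  have hLn : 0 ≤ L / n := by positivity
  have hunit : G (L / n) = G L / n := by
    have := natCast_mul_apply_of_add_eq hadd hLn n (by rw [mul_div_cancel₀ _ (by positivity)])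
    rw [mul_div_cancel₀ _ (by positivity)] at this
    field_simp
    linarith
  -- compare `y` with the grid point `⌊n y / L⌋ * (L / n) ≤ y`
  set k := ⌊n * y / L⌋₊
  have hk : (k : ℝ) ≤ n * y / L := Nat.floor_le (by have := hy.1; positivity)
  have hk' : n * y / L < k + 1 := Nat.lt_floor_add_one _
  have hky : k * (L / n) ≤ y := by
    rw [le_div_iff₀ hL] at hk
    rw [← mul_div_assoc, div_le_iff₀ (by positivity)]
    linarith
  have hk0 : 0 ≤ (k : ℝ) * (L / n) := by positivity
  have hfrac : y / L - 1 / n ≤ k / n := by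
    rw [sub_le_iff_le_add, ← add_div, le_div_iff₀ (by positivity)]
    linarith [show n * y / L = y / L * n by ring]
  calc (y / L - 1 / n) * G L ≤ k / n * G L :=
        mul_le_mul_of_nonneg_right hfrac (hG L ⟨hL.le, le_rfl⟩)
    _ = k * (G L / n) := by ring
    _ = G (k * (L / n)) := by
        rw [natCast_mul_apply_of_add_eq hadd hLn k (hky.trans hy.2), hunit]
    _ ≤ G (k * (L / n)) + G (y - k * (L / n)) :=
        le_add_of_nonneg_right (hG _ ⟨by linarith, by linarith [hy.2]⟩)
    _ = G y := by
        rw [← hadd _ _ hk0 (by linarith) (by linarith [hy.2]), add_sub_cancel]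

theorem eq_div_mul_of_add_eq (hL : 0 < L) (hG : ∀ x ∈ Icc 0 L, 0 ≤ G x)
    (hadd : ∀ x y, 0 ≤ x → 0 ≤ y → x + y ≤ L → G (x + y) = G x + G y) {x : ℝ}
    (hx : x ∈ Icc 0 L) : G x = x / L * G L := by
  have hGL : 0 ≤ G L := hG L ⟨hL.le, le_rfl⟩
  have hcompl : G L = G x + G (L - x) := by
    rw [← hadd _ _ hx.1 (by linarith [hx.2]) (by linarith), add_sub_cancel]
  have hclose : ∀ n : ℕ, 0 < n → |G x - x / L * G L| ≤ G L / n := by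
    intro n hn
    have h1 := sub_one_div_mul_le_of_add_eq hL hG hadd hx hn
    have h2 := sub_one_div_mul_le_of_add_eq hL hG hadd
      ⟨by linarith [hx.2], by linarith [hx.1]⟩ hn (y := L - x)
    rw [show (L - x) / L = 1 - x / L by field_simp] at h2
    rw [abs_le]
    constructor
    · linear_combination h1
    · linear_combination h2 - hcompl
  refine eq_of_forall_dist_le fun ε hε ↦ ?_
  obtain ⟨n, hn⟩ := exists_nat_gt (G L / ε)
  have hn0 : 0 < n := by exact_mod_cast (div_nonneg hGL hε.le).trans_lt hn
  calc dist (G x) (x / L * G L) ≤ G L / n := hclose n hn0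
    _ ≤ ε := by rw [div_le_iff₀ (by positivity)]; rw [div_lt_iff₀ hε] at hn; linarith

end AdditiveOnInterval

section InnerProductSpace

variable {E : Type*} [NormedAddCommGroup E] [InnerProductSpace ℝ E]

theorem exists_linearIsometryEquiv_apply_eq_pair {a b a' b' : E} (ha : ‖a‖ = ‖a'‖)
    (hb : ‖b‖ = ‖b'‖) (hab : ⟪a, b⟫ = ⟪a', b'⟫) :
    ∃ g : E ≃ₗᵢ[ℝ] E, g a = a' ∧ g b = b' := by
  set r := reflection (ℝ ∙ (a - a'))ᗮ
  have hra : r a = a' := reflection_sub ha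
  refine ⟨r.trans (reflection (ℝ ∙ (r b - b'))ᗮ), ?_, reflection_sub (by rw [r.norm_map, hb])⟩
  -- the second reflection fixes `a'` because `r b` and `b'` have the same inner product with it
  rw [LinearIsometryEquiv.trans_apply, hra]
  refine reflection_mem_subspace_eq_self ((mem_orthogonal_singleton_iff_inner_right).2 ?_)
  rw [inner_sub_left, ← hra, r.inner_map_map, hra, real_inner_comm a, real_inner_comm a', hab,
    sub_self]

theorem exists_linearIsometryEquiv_apply_eq {a b : E} (h : ‖a‖ = ‖b‖) :
    ∃ g : E ≃ₗᵢ[ℝ] E, g a = b :=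
  ⟨reflection (ℝ ∙ (a - b))ᗮ, reflection_sub h⟩

theorem Submodule.infinite_range_map_linearIsometryEquiv [FiniteDimensional ℝ E]
    {W : Submodule ℝ E} (hbot : W ≠ ⊥) (htop : W ≠ ⊤) :
    (range fun g : E ≃ₗᵢ[ℝ] E ↦ W.map (g : E →ₗ[ℝ] E)).Infinite := by
  intro hfin
  have : Finite (range fun g : E ≃ₗᵢ[ℝ] E ↦ W.map (g : E →ₗ[ℝ] E)) := hfin
  obtain ⟨a, haW, ha⟩ := W.ne_bot_iff.1 hbot
  -- every vector is an isometric image of a multiple of `a`, so finitely many images cover `E`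
  obtain ⟨⟨_, g, rfl⟩, hg⟩ := Subspace.exists_eq_top_of_iUnion_eq_univ
    (p := fun V : range fun g : E ≃ₗᵢ[ℝ] E ↦ W.map (g : E →ₗ[ℝ] E) ↦ (V : Submodule ℝ E)) <| by
      refine eq_univ_of_forall fun x ↦ ?_
      obtain ⟨g, hg⟩ := exists_linearIsometryEquiv_apply_eq (a := (‖x‖ / ‖a‖) • a) (b := x) <| by
        rw [norm_smul, norm_div, norm_norm, norm_norm, div_mul_cancel₀ _ (norm_ne_zero_iff.2 ha)]
      exact mem_iUnion.2 ⟨⟨_, g, rfl⟩, hg ▸ mem_map_of_mem (W.smul_mem _ haW)⟩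
  exact htop ((W.map_eq_top_iff (e := (g : E ≃ₗ[ℝ] E))).1 hg)

def wedge (a b : E) : Set E := {w | 0 < ⟪a, w⟫ ∧ ⟪b, w⟫ < 0}

theorem isOpen_wedge (a b : E) : IsOpen (wedge a b) := by
  have hcont (c : E) : Continuous fun w : E ↦ ⟪c, w⟫ := continuous_const.inner continuous_id
  exact (isOpen_lt continuous_const (hcont a)).inter (isOpen_lt (hcont b) continuous_const)

@[simp]
theorem wedge_self (a : E) : wedge a a = ∅ :=
  eq_empty_of_forall_notMem fun _ h ↦ (lt_asymm h.1 h.2).elim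

theorem wedge_neg_right_self (a : E) : wedge a (-a) = {w | 0 < ⟪a, w⟫} := by
  ext w
  simp only [wedge, inner_neg_left, neg_lt_zero, mem_ofPred_eq, and_self]

theorem wedge_smul_left {c : ℝ} (hc : 0 < c) (a b : E) : wedge (c • a) b = wedge a b := by
  ext w
  simp only [wedge, real_inner_smul_left, mul_pos_iff_of_pos_left hc, mem_ofPred_eq]

theorem wedge_smul_right {c : ℝ} (hc : 0 < c) (a b : E) : wedge a (c • b) = wedge a b := by
  ext w
  simp only [wedge, real_inner_smul_left, ← smul_eq_mul, smul_neg_iff_of_pos_left hc]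

noncomputable def greatCircle (a e : E) (θ : ℝ) : E := cos θ • a + sin θ • e

@[simp]
theorem greatCircle_zero (a e : E) : greatCircle a e 0 = a := by simp [greatCircle]

theorem greatCircle_pi (a e : E) : greatCircle a e π = -a := by simp [greatCircle]

theorem inner_greatCircle {a e : E} (ha : ‖a‖ = 1) (he : ‖e‖ = 1) (hae : ⟪a, e⟫ = 0) (s t : ℝ) :
    ⟪greatCircle a e s, greatCircle a e t⟫ = cos (t - s) := by
  simp only [greatCircle, inner_add_left, inner_add_right, real_inner_smul_left,
    real_inner_smul_right, real_inner_self_eq_norm_sq, ha, he, hae, real_inner_comm a e, cos_sub]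
  ring

theorem norm_greatCircle {a e : E} (ha : ‖a‖ = 1) (he : ‖e‖ = 1) (hae : ⟪a, e⟫ = 0) (θ : ℝ) :
    ‖greatCircle a e θ‖ = 1 := by
  rw [norm_eq_sqrt_real_inner, inner_greatCircle ha he hae, sub_self, cos_zero, sqrt_one]

theorem sin_add_mul_inner_greatCircle (a e w : E) (s t : ℝ) :
    sin (s + t) * ⟪greatCircle a e s, w⟫ =
      sin t * ⟪a, w⟫ + sin s * ⟪greatCircle a e (s + t), w⟫ := by
  simp only [greatCircle, inner_add_left, real_inner_smul_left, sin_add, cos_add]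
  linear_combination (sin t * ⟪a, w⟫) * sin_sq_add_cos_sq s

theorem wedge_greatCircle_add_diff (a e : E) {s t : ℝ} (hs : 0 < s) (ht : 0 < t)
    (hst : s + t ≤ π) :
    wedge a (greatCircle a e (s + t)) \ {w | ⟪greatCircle a e s, w⟫ = 0} =
      wedge a (greatCircle a e s) ∪ wedge (greatCircle a e s) (greatCircle a e (s + t)) := by
  have hsin_s : 0 < sin s := sin_pos_of_pos_of_lt_pi hs (by linarith)
  have hsin_t : 0 < sin t := sin_pos_of_pos_of_lt_pi ht (by linarith)
  have hsin_st : 0 ≤ sin (s + t) := sin_nonneg_of_nonneg_of_le_pi (by linarith) hst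
  ext w
  have key := sin_add_mul_inner_greatCircle a e w s t
  simp only [wedge, mem_sdiff, mem_union, mem_ofPred_eq]
  constructor
  · rintro ⟨⟨hwa, hwc⟩, hwb⟩
    rcases lt_or_gt_of_ne hwb with hwb | hwb
    · exact .inl ⟨hwa, hwb⟩
    · exact .inr ⟨hwb, hwc⟩
  · rintro (⟨hwa, hwb⟩ | ⟨hwb, hwc⟩)
    · refine ⟨⟨hwa, ?_⟩, hwb.ne⟩
      nlinarith [mul_nonneg hsin_st (neg_nonneg.2 hwb.le), mul_pos hsin_t hwa]
    · refine ⟨⟨?_, hwc⟩, hwb.ne'⟩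
      nlinarith [mul_nonneg hsin_st hwb.le, mul_pos hsin_s (neg_pos.2 hwc)]

theorem exists_greatCircle_angle_eq {a b : E} (ha : ‖a‖ = 1) (hb : ‖b‖ = 1)
    (h0 : angle a b ≠ 0) (hπ : angle a b ≠ π) :
    ∃ e : E, ‖e‖ = 1 ∧ ⟪a, e⟫ = 0 ∧ greatCircle a e (angle a b) = b := by
  set θ := angle a b
  have hsin : 0 < sin θ := sin_pos_of_pos_of_lt_pi ((angle_nonneg a b).lt_of_ne' h0)
    ((angle_le_pi a b).lt_of_ne hπ)
  have hcos : cos θ = ⟪a, b⟫ := by rw [cos_angle, ha, hb, mul_one, div_one]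
  have hperp : ⟪a, b - cos θ • a⟫ = 0 := by
    rw [inner_sub_right, real_inner_smul_right, real_inner_self_eq_norm_sq, ha, hcos]; ring
  have hnorm : ‖b - cos θ • a‖ = sin θ := by
    refine (sq_eq_sq₀ (norm_nonneg _) hsin.le).1 ?_
    rw [norm_sub_sq_real, real_inner_smul_right, real_inner_comm, ← hcos, norm_smul, mul_pow,
      norm_eq_abs, sq_abs, ha, hb]
    linear_combination -sin_sq_add_cos_sq θ
  refine ⟨(sin θ)⁻¹ • (b - cos θ • a), ?_, ?_, ?_⟩
  · rw [norm_smul, hnorm, norm_inv, norm_of_nonneg hsin.le, inv_mul_cancel₀ hsin.ne']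
  · rw [real_inner_smul_right, hperp, mul_zero]
  · rw [greatCircle, smul_inv_smul₀ hsin.ne', add_sub_cancel]

section Invariant

variable [MeasurableSpace E] [BorelSpace E]

def MeasureTheory.Measure.IsIsometryInvariant (μ : Measure E) : Prop :=
  ∀ g : E ≃ₗᵢ[ℝ] E, μ.map g = μ

namespace MeasureTheory.Measure.IsIsometryInvariant

variable {μ : Measure E}

theorem measure_preimage (hμ : μ.IsIsometryInvariant) (g : E ≃ₗᵢ[ℝ] E) (s : Set E) :
    μ (g ⁻¹' s) = μ s := by
  conv_rhs => rw [← hμ g]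
  exact (g.toHomeomorph.toMeasurableEquiv.map_apply s).symm

theorem measure_map_submodule (hμ : μ.IsIsometryInvariant) (g : E ≃ₗᵢ[ℝ] E)
    (W : Submodule ℝ E) : μ (W.map (g : E →ₗ[ℝ] E)) = μ W := by
  rw [← hμ.measure_preimage g.symm W]
  congr 1
  ext x
  simp only [map_coe, mem_preimage, SetLike.mem_coe]
  constructor
  · rintro ⟨y, hy, rfl⟩
    simpa using hy
  · exact fun hx ↦ ⟨_, hx, g.apply_symm_apply x⟩

theorem measure_wedge_congr (hμ : μ.IsIsometryInvariant) {a b a' b' : E} (ha : ‖a‖ = ‖a'‖)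
    (hb : ‖b‖ = ‖b'‖) (hab : ⟪a, b⟫ = ⟪a', b'⟫) : μ (wedge a b) = μ (wedge a' b') := by
  obtain ⟨g, hga, hgb⟩ := exists_linearIsometryEquiv_apply_eq_pair ha.symm hb.symm hab.symm
  rw [← hμ.measure_preimage g]
  congr 1
  ext w
  simp only [wedge, mem_preimage, mem_ofPred_eq, ← hga, ← hgb, g.inner_map_map]

variable [FiniteDimensional ℝ E]

/-- A subspace `W` of minimal dimension with positive measure would have infinitely many isometric
images, all of the same measure and with null pairwise intersections. -/
theorem measure_submodule_eq_zero [IsFiniteMeasure μ] (hμ : μ.IsIsometryInvariant)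
    (h0 : μ {0} = 0) {W : Submodule ℝ E} (hW : W ≠ ⊤) : μ W = 0 := by
  induction hd : finrank ℝ W using Nat.strong_induction_on generalizing W with
  | _ d ih =>
  by_contra hpos
  have hbot : W ≠ ⊥ := by rintro rfl; exact hpos h0
  set O := range fun g : E ≃ₗᵢ[ℝ] E ↦ W.map (g : E →ₗ[ℝ] E)
  have hO : ∀ V ∈ O, μ V = μ W ∧ finrank ℝ V = d ∧ V ≠ ⊤ := by
    rintro _ ⟨g, rfl⟩
    exact ⟨hμ.measure_map_submodule g W, hd ▸ LinearEquiv.finrank_map_eq (g : E ≃ₗ[ℝ] E) W,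
      fun h ↦ hW ((W.map_eq_top_iff (e := (g : E ≃ₗ[ℝ] E))).1 h)⟩
  have hdisj : Pairwise (AEDisjoint μ on fun V : O ↦ (V : Set E)) := by
    rintro ⟨V, hV⟩ ⟨V', hV'⟩ hne
    obtain ⟨-, hVd, hVtop⟩ := hO V hV
    obtain ⟨-, hV'd, -⟩ := hO V' hV'
    have hlt : V ⊓ V' < V := by
      refine inf_le_left.lt_of_ne fun h ↦ hne (Subtype.ext ?_)
      exact eq_of_le_of_finrank_eq (h.ge.trans inf_le_right) (hVd.trans hV'd.symm)
    exact ih _ ((finrank_lt_finrank_of_lt hlt).trans_eq hVd)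
      (ne_top_of_lt (hlt.trans_le le_top)) rfl
  have hfin := Measure.finite_const_le_meas_of_disjoint_iUnion₀ μ (pos_iff_ne_zero.2 hpos)
    (fun V : O ↦ (closed_of_finiteDimensional (V : Submodule ℝ E)).measurableSet.nullMeasurableSet)
    hdisj (measure_ne_top μ _)
  refine infinite_range_map_linearIsometryEquiv hbot hW (Set.finite_coe_iff.1 ?_)
  rw [← Set.finite_univ_iff]
  convert hfin
  exact (eq_univ_of_forall fun V : O ↦ (hO V.1 V.2).1.ge).symm

theorem measure_inner_eq_zero [IsFiniteMeasure μ] (hμ : μ.IsIsometryInvariant) (h0 : μ {0} = 0)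
    {a : E} (ha : a ≠ 0) : μ {w | ⟪a, w⟫ = 0} = 0 := by
  have hW : (ℝ ∙ a)ᗮ ≠ ⊤ := fun h ↦ ha (span_singleton_eq_bot.1 ((orthogonal_eq_top_iff _).1 h))
  convert hμ.measure_submodule_eq_zero h0 hW using 2
  ext w
  exact (mem_orthogonal_singleton_iff_inner_right).symm

theorem measure_inner_pos [IsProbabilityMeasure μ] (hμ : μ.IsIsometryInvariant) (h0 : μ {0} = 0)
    {a : E} (ha : a ≠ 0) : μ {w | 0 < ⟪a, w⟫} = 2⁻¹ := by
  have hneg : μ {w | ⟪a, w⟫ < 0} = μ {w | 0 < ⟪a, w⟫} := by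
    rw [← hμ.measure_preimage (LinearIsometryEquiv.neg ℝ)]
    congr 1
    ext w
    simp [inner_neg_right]
  have hsplit : {w | 0 < ⟪a, w⟫} ∪ {w | ⟪a, w⟫ < 0} = {w | ⟪a, w⟫ = 0}ᶜ := by
    ext w
    simp [lt_or_lt_iff_ne, ne_comm]
  have hcont : Continuous fun w ↦ ⟪a, w⟫ := continuous_const.inner continuous_id
  have := measure_union (μ := μ) (s₁ := {w | 0 < ⟪a, w⟫}) (s₂ := {w | ⟪a, w⟫ < 0})
    (disjoint_left.2 fun _ h h' ↦ lt_asymm (α := ℝ) h h')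
    (isOpen_lt hcont continuous_const).measurableSet
  rw [hsplit, hneg, measure_compl (isClosed_eq hcont continuous_const).measurableSet
    (measure_ne_top _ _), hμ.measure_inner_eq_zero h0 ha, measure_univ, tsub_zero] at this
  exact ENNReal.eq_inv_of_mul_eq_one_left (by rw [mul_two, this])

theorem measure_wedge_greatCircle_add [IsFiniteMeasure μ] (hμ : μ.IsIsometryInvariant)
    (h0 : μ {0} = 0) {a e : E} (ha : ‖a‖ = 1) (he : ‖e‖ = 1) (hae : ⟪a, e⟫ = 0) {s t : ℝ}
    (hs : 0 < s) (ht : 0 < t) (hst : s + t ≤ π) :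
    μ (wedge a (greatCircle a e (s + t))) =
      μ (wedge a (greatCircle a e s)) + μ (wedge a (greatCircle a e t)) := by
  have hγs : greatCircle a e s ≠ 0 := by
    rw [← norm_ne_zero_iff, norm_greatCircle ha he hae]
    exact one_ne_zero
  have hshift : μ (wedge (greatCircle a e s) (greatCircle a e (s + t))) =
      μ (wedge a (greatCircle a e t)) := by
    refine hμ.measure_wedge_congr (by rw [norm_greatCircle ha he hae, ha])
      (by rw [norm_greatCircle ha he hae, norm_greatCircle ha he hae]) ?_
    have h0t := inner_greatCircle ha he hae 0 t
    rw [greatCircle_zero, sub_zero] at h0t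
    rw [inner_greatCircle ha he hae, h0t, add_sub_cancel_left]
  rw [← measure_sdiff_null (hμ.measure_inner_eq_zero h0 hγs),
    wedge_greatCircle_add_diff a e hs ht hst,
    measure_union (disjoint_left.2 fun _ h h' ↦ lt_asymm h.2 h'.1) (isOpen_wedge _ _).measurableSet,
    hshift]

theorem measure_wedge_greatCircle [IsProbabilityMeasure μ] (hμ : μ.IsIsometryInvariant)
    (h0 : μ {0} = 0) {a e : E} (ha : ‖a‖ = 1) (he : ‖e‖ = 1) (hae : ⟪a, e⟫ = 0) {θ : ℝ}
    (hθ : θ ∈ Icc 0 π) : μ (wedge a (greatCircle a e θ)) = ENNReal.ofReal (θ / (2 * π)) := by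
  set G : ℝ → ℝ := fun θ ↦ (μ (wedge a (greatCircle a e θ))).toReal
  have hG0 : G 0 = 0 := by simp [G]
  have hGpi : G π = 1 / 2 := by
    have ha0 : a ≠ 0 := by rintro rfl; simp at ha
    simp [G, greatCircle_pi, wedge_neg_right_self, hμ.measure_inner_pos h0 ha0]
  have hadd : ∀ s t, 0 ≤ s → 0 ≤ t → s + t ≤ π → G (s + t) = G s + G t := by
    intro s t hs ht hst
    rcases hs.eq_or_lt with rfl | hs
    · rw [hG0, zero_add, zero_add]
    rcases ht.eq_or_lt with rfl | ht
    · rw [hG0, add_zero, add_zero]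
    simp only [G, hμ.measure_wedge_greatCircle_add h0 ha he hae hs ht hst]
    exact ENNReal.toReal_add (measure_ne_top _ _) (measure_ne_top _ _)
  have hlin := eq_div_mul_of_add_eq (G := G) pi_pos (fun _ _ ↦ ENNReal.toReal_nonneg) hadd hθ
  rw [← ENNReal.ofReal_toReal (measure_ne_top μ _)]
  change ENNReal.ofReal (G θ) = _
  rw [hlin, hGpi]
  congr 1
  ring

theorem measure_wedge [IsProbabilityMeasure μ] (hμ : μ.IsIsometryInvariant) (h0 : μ {0} = 0)
    {a b : E} (ha : a ≠ 0) (hb : b ≠ 0) :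
    μ (wedge a b) = ENNReal.ofReal (angle a b / (2 * π)) := by
  by_cases hzero : angle a b = 0
  · obtain ⟨-, r, hr, rfl⟩ := angle_eq_zero_iff.1 hzero
    rw [hzero, zero_div, ENNReal.ofReal_zero, wedge_smul_right hr, wedge_self, measure_empty]
  by_cases hpi : angle a b = π
  · obtain ⟨-, r, hr, rfl⟩ := angle_eq_pi_iff.1 hpi
    rw [hpi, show r • a = (-r) • -a by simp, wedge_smul_right (neg_pos.2 hr),
      wedge_neg_right_self, hμ.measure_inner_pos h0 ha, div_mul_cancel_right₀ pi_ne_zero,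
      ENNReal.ofReal_inv_of_pos two_pos, ENNReal.ofReal_ofNat]
  have hangle : angle (‖a‖⁻¹ • a) (‖b‖⁻¹ • b) = angle a b := by
    rw [angle_smul_left_of_pos _ _ (inv_pos.2 (norm_pos_iff.2 ha)),
      angle_smul_right_of_pos _ _ (inv_pos.2 (norm_pos_iff.2 hb))]
  have hunit {x : E} (hx : x ≠ 0) : ‖‖x‖⁻¹ • x‖ = 1 := by
    rw [norm_smul, norm_inv, norm_norm, inv_mul_cancel₀ (norm_ne_zero_iff.2 hx)]
  obtain ⟨e, he, hae, hb'⟩ := exists_greatCircle_angle_eq (hunit ha) (hunit hb) (hangle ▸ hzero)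
    (hangle ▸ hpi)
  rw [← wedge_smul_left (inv_pos.2 (norm_pos_iff.2 ha)),
    ← wedge_smul_right (inv_pos.2 (norm_pos_iff.2 hb)), ← hb', hangle]
  exact hμ.measure_wedge_greatCircle h0 (hunit ha) he hae
    ⟨angle_nonneg a b, angle_le_pi a b⟩

end MeasureTheory.Measure.IsIsometryInvariant

end Invariant

end InnerProductSpace

theorem stmt11 {N : ℕ} (u v : EuclideanSpace ℝ (Fin N))
    (hu : u ≠ 0) (hv : v ≠ 0)
    (μ : Measure (EuclideanSpace ℝ (Fin N))) [IsProbabilityMeasure μ]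
    (hsphere : μ (Metric.sphere (0 : EuclideanSpace ℝ (Fin N)) 1) = 1)
    (hinv : ∀ f : EuclideanSpace ℝ (Fin N) ≃ₗᵢ[ℝ] EuclideanSpace ℝ (Fin N),
      μ.map f = μ) :
    μ {w | (0 ≤ ⟪u, w⟫ ↔ 0 ≤ ⟪v, w⟫)} =
      ENNReal.ofReal (1 - Real.arccos (⟪u, v⟫ / (‖u‖ * ‖v‖)) / Real.pi) := by
  have hμ : μ.IsIsometryInvariant := hinv
  have h0 : μ {0} = 0 := measure_mono_null (by simp)
    ((prob_compl_eq_zero_iff Metric.isClosed_sphere.measurableSet).2 hsphere)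
  set T := {w | (0 ≤ ⟪u, w⟫ ↔ 0 ≤ ⟪v, w⟫)}
  have hT : MeasurableSet T := by measurability
  have hTc : Tᶜ \ ({w | ⟪u, w⟫ = 0} ∪ {w | ⟪v, w⟫ = 0}) = wedge u v ∪ wedge v u := by
    ext w
    simp only [T, wedge, mem_sdiff, mem_compl_iff, mem_union, mem_ofPred_eq]
    grind
  have hθ : 0 ≤ angle u v / (2 * π) := div_nonneg (angle_nonneg u v) (by positivity)
  have hmTc : μ Tᶜ = ENNReal.ofReal (angle u v / π) := by
    rw [← measure_sdiff_null (measure_union_null (hμ.measure_inner_eq_zero h0 hu)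
      (hμ.measure_inner_eq_zero h0 hv)), hTc, measure_union
      (disjoint_left.2 fun _ h h' ↦ lt_asymm h.1 h'.2) (isOpen_wedge _ _).measurableSet,
      hμ.measure_wedge h0 hu hv, hμ.measure_wedge h0 hv hu, angle_comm v u,
      ← ENNReal.ofReal_add hθ hθ]
    congr 1
    ring
  change μ T = ENNReal.ofReal (1 - angle u v / π)
  rw [← compl_compl T, prob_compl_eq_one_sub hT.compl, hmTc,
    ENNReal.ofReal_sub _ (div_nonneg (angle_nonneg u v) pi_pos.le), ENNReal.ofReal_one]
end
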